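/- arXiv:2509.09407 — 2 statements merged into one kernel-verified Lean document; each statement's English description precedes it below -/
import Mathlib

section
/- Let G be a claw-free graph with maximum degree Δ(G) ≤ 4 such that χ'_inj(G) > 13, and suppose every claw-free graph H with Δ(H) ≤ 4 and |V(H)| < |V(G)| satisfies χ'_inj(H) ≤ 13. Then every vertex of G has degree exactly 4, i.e., the minimum degree δ(G) = 4. -/
open SimpleGraph

/-- A graph is claw-free if it has no induced subgraph isomorphic to `K_{1,3}`. -/
def ClawFree {V : Type} (G : SimpleGraph V) : Prop :=
  IsEmpty ((completeBipartiteGraph (Fin 1) (Fin 3)) ↪g G)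

/-- Edge `e` sees edge `e'` if they are at distance two (share no endpoint and some
edge of `G` joins an endpoint of `e` to an endpoint of `e'`) or lie in a common triangle. -/
def Sees {V : Type} (G : SimpleGraph V) (e e' : Sym2 V) : Prop :=
  ((∀ x ∈ e, x ∉ e') ∧ ∃ x ∈ e, ∃ y ∈ e', G.Adj x y) ∨
  (∃ x y z : V, G.Adj x y ∧ G.Adj y z ∧ G.Adj x z ∧
    e ∈ ({s(x, y), s(y, z), s(x, z)} : Set (Sym2 V)) ∧
    e' ∈ ({s(x, y), s(y, z), s(x, z)} : Set (Sym2 V)))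

/-- An injective edge-coloring: distinct edges that see each other get distinct colors. -/
def IsInjEdgeColoring {V : Type} (G : SimpleGraph V) {k : ℕ}
    (φ : G.edgeSet → Fin k) : Prop :=
  ∀ e e' : G.edgeSet, (e : Sym2 V) ≠ (e' : Sym2 V) → Sees G e e' → φ e ≠ φ e'

/-- `G` has an injective `k`-edge-coloring. -/
def HasInjColoring {V : Type} (G : SimpleGraph V) (k : ℕ) : Prop :=
  ∃ φ : G.edgeSet → Fin k, IsInjEdgeColoring G φ

/-- The injective chromatic index: the least `k` such that `G` has an injective
`k`-edge-coloring. -/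
noncomputable def injChromIndex {V : Type} (G : SimpleGraph V) : ℕ :=
  sInf {k | HasInjColoring G k}

/-! If some vertex `v` had degree at most `3`, minimality would give an injective
`13`-edge-colouring of `G - v`, and it extends greedily to the edges at `v`: an edge `uv`
sees at most `2 deg u + 2 deg v - 2 ≤ 12` other edges. Indeed, each common neighbour of `u` and
`v` carries at most four seen edges, while by claw-freeness the private neighbours of `u`
(resp. `v`) form a clique, so their edges avoiding `u` (resp. `v`) pairwise overlap and number
at most twice their count plus one. -/

namespace Finset

theorem card_biUnion_le_of_pairwise_inter_nonempty {ι α : Type*} [DecidableEq α]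
    {s : Finset ι} {t : ι → Finset α} {m : ℕ} (hcard : ∀ i ∈ s, #(t i) ≤ m)
    (hinter : ∀ i ∈ s, ∀ j ∈ s, i ≠ j → (t i ∩ t j).Nonempty) :
    #(s.biUnion t) ≤ (m - 1) * #s + 1 := by
  classical
  induction s using Finset.induction_on with
  | empty => simp
  | @insert i s hi ih =>
    rcases s.eq_empty_or_nonempty with rfl | ⟨j, hj⟩
    · simpa using (hcard i (mem_insert_self i ∅)).trans (by omega)
    obtain ⟨a, ha⟩ := hinter i (mem_insert_self i s) j (mem_insert_of_mem hj) (by grind)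
    have hnew : t i \ s.biUnion t ⊆ (t i).erase a := fun b hb => by
      obtain ⟨hbi, hbs⟩ := mem_sdiff.mp hb
      exact mem_erase.mpr
        ⟨fun hba => hbs (mem_biUnion.mpr ⟨j, hj, hba ▸ (mem_inter.mp ha).2⟩), hbi⟩
    have hi_new : #(t i \ s.biUnion t) ≤ m - 1 := by
      have := hcard i (mem_insert_self i s)
      grw [card_le_card hnew, card_erase_of_mem (mem_inter.mp ha).1]
      omega
    have hs_old : #(s.biUnion t) ≤ (m - 1) * #s + 1 :=
      ih (fun k hk => hcard k (mem_insert_of_mem hk))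
        fun k hk l hl => hinter k (mem_insert_of_mem hk) l (mem_insert_of_mem hl)
    calc #((insert i s).biUnion t) = #(t i \ s.biUnion t) + #(s.biUnion t) := by
          rw [biUnion_insert, card_sdiff_add_card]
      _ ≤ (m - 1) + ((m - 1) * #s + 1) := add_le_add hi_new hs_old
      _ = (m - 1) * #(insert i s) + 1 := by rw [card_insert_of_notMem hi]; ring

end Finset

open Finset

theorem exists_proper_coloring_extension {α : Type*} [DecidableEq α] {k : ℕ}
    {r : α → α → Prop} (hsymm : ∀ a b, r a b → r b a) (hirr : ∀ a, ¬r a a)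
    (N : α → Finset α) (S : Finset α) (hN : ∀ a ∈ S, ∀ b, r a b → b ∈ N a)
    (hcard : ∀ a ∈ S, #(N a) < k) (c₀ : α → Fin k)
    (hc₀ : ∀ a b, a ∉ S → b ∉ S → r a b → c₀ a ≠ c₀ b) :
    ∃ c : α → Fin k, ∀ a b, r a b → c a ≠ c b := by
  induction S using Finset.induction_on generalizing c₀ with
  | empty => exact ⟨c₀, fun a b => hc₀ a b (notMem_empty a) (notMem_empty b)⟩
  | @insert a S ha ih =>
    obtain ⟨col, -, hcol⟩ : ∃ col ∈ univ, col ∉ (N a).image c₀ :=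
      exists_mem_notMem_of_card_lt_card <| card_image_le.trans_lt <|
        (hcard a (mem_insert_self a S)).trans_eq (card_fin k).symm
    have hcol_ne : ∀ b, r a b → col ≠ c₀ b := fun b hab hb =>
      hcol (mem_image.mpr ⟨b, hN a (mem_insert_self a S) b hab, hb.symm⟩)
    refine ih (fun b hb => hN b (mem_insert_of_mem hb))
      (fun b hb => hcard b (mem_insert_of_mem hb)) (Function.update c₀ a col)
      fun x y hx hy hxy => ?_
    rw [Function.update_apply, Function.update_apply]
    split_ifs with hxa hya hya
    · exact absurd (hxa.trans hya.symm ▸ hxy) (hirr y)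
    · exact hcol_ne y (hxa ▸ hxy)
    · exact (hcol_ne x (hya ▸ hsymm x y hxy)).symm
    · exact hc₀ x y (by simp [hxa, hx]) (by simp [hya, hy]) hxy

section Sees

variable {V W : Type} {G : SimpleGraph V}

theorem Sees.symm {e f : Sym2 V} (h : Sees G e f) : Sees G f e := by
  rcases h with ⟨hdisj, x, hx, y, hy, hxy⟩ | ⟨x, y, z, hxy, hyz, hxz, he, hf⟩
  · exact Or.inl ⟨fun a ha hae => hdisj a hae ha, y, hy, x, hx, hxy.symm⟩
  · exact Or.inr ⟨x, y, z, hxy, hyz, hxz, hf, he⟩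

theorem exists_eq_of_mem_triangle {x y z : V} (hxy : G.Adj x y) (hyz : G.Adj y z)
    (hxz : G.Adj x z) {e f : Sym2 V}
    (he : e ∈ ({s(x, y), s(y, z), s(x, z)} : Set (Sym2 V)))
    (hf : f ∈ ({s(x, y), s(y, z), s(x, z)} : Set (Sym2 V))) (hne : e ≠ f) :
    ∃ a b c, G.Adj a b ∧ G.Adj b c ∧ G.Adj a c ∧ e = s(a, b) ∧ f = s(a, c) := by
  simp only [Set.mem_insert_iff, Set.mem_singleton_iff] at he hf
  rcases he with rfl | rfl | rfl <;> rcases hf with rfl | rfl | rfl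
  all_goals first
    | exact absurd rfl hne
    | exact ⟨x, y, z, hxy, hyz, hxz, rfl, rfl⟩
    | exact ⟨x, z, y, hxz, hyz.symm, hxy, rfl, rfl⟩
    | exact ⟨y, x, z, hxy.symm, hxz, hyz, Sym2.eq_swap, rfl⟩
    | exact ⟨y, z, x, hyz, hxz.symm, hxy.symm, rfl, Sym2.eq_swap⟩
    | exact ⟨z, x, y, hxz.symm, hxy, hyz.symm, Sym2.eq_swap, Sym2.eq_swap⟩
    | exact ⟨z, y, x, hyz.symm, hxy.symm, hxz.symm, Sym2.eq_swap, Sym2.eq_swap⟩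

theorem Sees.of_map {H : SimpleGraph W} (ι : H ↪g G) {e f : Sym2 W} (hne : e ≠ f)
    (h : Sees G (e.map ι) (f.map ι)) : Sees H e f := by
  rcases h with ⟨hdisj, x, hx, y, hy, hxy⟩ | ⟨x, y, z, hxy, hyz, hxz, he, hf⟩
  · obtain ⟨x, hxe, rfl⟩ := Sym2.mem_map.mp hx
    obtain ⟨y, hyf, rfl⟩ := Sym2.mem_map.mp hy
    exact Or.inl ⟨fun a hae haf => hdisj _ (Sym2.mem_map.mpr ⟨a, hae, rfl⟩)
      (Sym2.mem_map.mpr ⟨a, haf, rfl⟩), x, hxe, y, hyf, ι.map_adj_iff.mp hxy⟩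
  · have hinj := Sym2.map.injective ι.injective
    obtain ⟨a, b, c, hab, hbc, hac, hea, hfa⟩ :=
      exists_eq_of_mem_triangle hxy hyz hxz he hf (hinj.ne hne)
    -- two distinct edges cover the triangle, so all its vertices lie in the image of `ι`
    obtain ⟨a, -, rfl⟩ := Sym2.mem_map.mp (hea ▸ Sym2.mem_mk_left a b)
    obtain ⟨b, -, rfl⟩ := Sym2.mem_map.mp (hea ▸ Sym2.mem_mk_right _ b)
    obtain ⟨c, -, rfl⟩ := Sym2.mem_map.mp (hfa ▸ Sym2.mem_mk_right _ c)
    exact Or.inr ⟨a, b, c, ι.map_adj_iff.mp hab, ι.map_adj_iff.mp hbc, ι.map_adj_iff.mp hac,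
      Or.inl (hinj hea), Or.inr (Or.inr (hinj hfa))⟩

end Sees

section ClawFree

variable {V W : Type} {G : SimpleGraph V}

theorem ClawFree.of_embedding {H : SimpleGraph W} (hG : ClawFree G) (ι : H ↪g G) :
    ClawFree H :=
  ⟨fun κ => hG.false (ι.comp κ)⟩

theorem ClawFree.adj_of_not_adj (hG : ClawFree G) {c a x y : V} (hca : G.Adj c a)
    (hcx : G.Adj c x) (hcy : G.Adj c y) (hax : a ≠ x) (hay : a ≠ y) (hxy : x ≠ y)
    (hnax : ¬G.Adj a x) (hnay : ¬G.Adj a y) : G.Adj x y := by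
  by_contra hnxy
  let leg : Fin 1 ⊕ Fin 3 → V := Sum.elim (fun _ => c) ![a, x, y]
  refine hG.false ⟨⟨leg, ?_⟩, fun {i j} => ?_⟩
  · rintro (i | i) (j | j) h <;> fin_cases i <;> fin_cases j <;>
      simp_all [leg, hca.ne, hcx.ne, hcy.ne, hca.ne', hcx.ne', hcy.ne']
  · change G.Adj (leg i) (leg j) ↔ _
    rcases i with i | i <;> rcases j with j | j <;> fin_cases i <;> fin_cases j <;>
      simp_all [leg, adj_comm]

end ClawFree

section InjColoring

variable {V : Type} {G : SimpleGraph V}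

theorem HasInjColoring.mono {k m : ℕ} (h : HasInjColoring G k) (hkm : k ≤ m) :
    HasInjColoring G m := by
  obtain ⟨φ, hφ⟩ := h
  exact ⟨Fin.castLE hkm ∘ φ,
    fun e f hne hs hφef => hφ e f hne hs (Fin.castLE_injective hkm hφef)⟩

theorem hasInjColoring_card_edgeSet [Fintype G.edgeSet] :
    HasInjColoring G (Fintype.card G.edgeSet) :=
  ⟨Fintype.equivFin G.edgeSet,
    fun _ _ hne _ h => hne (congrArg _ ((Fintype.equivFin _).injective h))⟩

theorem hasInjColoring_of_injChromIndex_le [Finite V] {k : ℕ} (h : injChromIndex G ≤ k) :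
    HasInjColoring G k := by
  have : Fintype G.edgeSet := Fintype.ofFinite _
  have hmin : HasInjColoring G (injChromIndex G) :=
    Nat.sInf_mem (s := {k | HasInjColoring G k}) ⟨_, hasInjColoring_card_edgeSet⟩
  exact hmin.mono h

end InjColoring

namespace SimpleGraph

variable {V : Type} {G : SimpleGraph V}

open Classical in
noncomputable def seenEdges [Fintype V] (G : SimpleGraph V) (e : Sym2 V) : Finset (Sym2 V) :=
  G.edgeFinset.filter fun f => f ≠ e ∧ Sees G e f

theorem mem_seenEdges [Fintype V] {e f : Sym2 V} :
    f ∈ G.seenEdges e ↔ f ∈ G.edgeSet ∧ f ≠ e ∧ Sees G e f := by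
  classical
  simp [seenEdges]

section Counting

variable [Fintype V] [DecidableRel G.Adj] [DecidableEq V]

theorem seenEdges_subset (u v : V) :
    G.seenEdges s(u, v) ⊆
      ((G.neighborFinset u ∩ G.neighborFinset v).biUnion (fun x => G.incidenceFinset x) ∪
        (G.neighborFinset u \ insert v (G.neighborFinset v)).biUnion
          fun x => (G.incidenceFinset x).erase s(u, x)) ∪
        (G.neighborFinset v \ insert u (G.neighborFinset u)).biUnion
          fun x => (G.incidenceFinset x).erase s(v, x) := by
  intro f hf
  obtain ⟨hfE, hne, hsees⟩ := mem_seenEdges.mp hf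
  simp only [mem_union, mem_biUnion, mem_inter, mem_sdiff, mem_insert, mem_erase,
    mem_neighborFinset, mem_incidenceFinset, incidenceSet, Set.mem_ofPred_eq]
  rcases hsees with ⟨hdisj, x, hx, y, hyf, hxy⟩ | ⟨x, y, z, hxy, hyz, hxz, he, hf⟩
  · have hu : u ∉ f := hdisj u (Sym2.mem_mk_left u v)
    have hv : v ∉ f := hdisj v (Sym2.mem_mk_right u v)
    rcases Sym2.mem_iff.mp hx with rfl | rfl
    · by_cases hvy : G.Adj v y
      · exact Or.inl (Or.inl ⟨y, ⟨hxy, hvy⟩, hfE, hyf⟩)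
      · exact Or.inl (Or.inr ⟨y, ⟨hxy, by rintro (rfl | h); exacts [hv hyf, hvy h]⟩,
          fun h => hu (h ▸ Sym2.mem_mk_left _ _), hfE, hyf⟩)
    · by_cases huy : G.Adj u y
      · exact Or.inl (Or.inl ⟨y, ⟨huy, hxy⟩, hfE, hyf⟩)
      · exact Or.inr ⟨y, ⟨hxy, by rintro (rfl | h); exacts [hu hyf, huy h]⟩,
          fun h => hv (h ▸ Sym2.mem_mk_left _ _), hfE, hyf⟩
  · obtain ⟨a, b, c, hab, hbc, hac, hea, hfa⟩ :=
      exists_eq_of_mem_triangle hxy hyz hxz he hf hne.symm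
    rw [hfa] at hfE ⊢
    rcases Sym2.eq_iff.mp hea with ⟨rfl, rfl⟩ | ⟨rfl, rfl⟩
    · exact Or.inl (Or.inl ⟨c, ⟨hac, hbc⟩, hfE, Sym2.mem_mk_right _ _⟩)
    · exact Or.inl (Or.inl ⟨c, ⟨hbc, hac⟩, hfE, Sym2.mem_mk_right _ _⟩)

theorem card_biUnion_incidenceFinset_erase_le (hclaw : ClawFree G) (hΔ : G.maxDegree ≤ 4)
    {u v : V} (huv : G.Adj u v) :
    #((G.neighborFinset u \ insert v (G.neighborFinset v)).biUnion
      fun x => (G.incidenceFinset x).erase s(u, x)) ≤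
      2 * #(G.neighborFinset u \ insert v (G.neighborFinset v)) + 1 := by
  have hP : ∀ x ∈ G.neighborFinset u \ insert v (G.neighborFinset v),
      G.Adj u x ∧ v ≠ x ∧ ¬G.Adj v x := fun x hx => by
    simp only [mem_sdiff, mem_insert, mem_neighborFinset, not_or] at hx
    exact ⟨hx.1, Ne.symm hx.2.1, hx.2.2⟩
  refine card_biUnion_le_of_pairwise_inter_nonempty (m := 3) (fun x hx => ?_)
    fun x hx y hy hxy => ?_
  · have hux : s(u, x) ∈ G.incidenceFinset x :=
      (mem_incidenceFinset _ _ _).mpr (G.mk'_mem_incidenceSet_right_iff.mpr (hP x hx).1)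
    have := G.degree_le_maxDegree x
    rw [card_erase_of_mem hux, card_incidenceFinset_eq_degree]
    omega
  · obtain ⟨hux, hvx, hnvx⟩ := hP x hx
    obtain ⟨huy, hvy, hnvy⟩ := hP y hy
    have hxy' : G.Adj x y := hclaw.adj_of_not_adj huv hux huy hvx hvy hxy hnvx hnvy
    refine ⟨s(x, y), mem_inter.mpr
      ⟨mem_erase.mpr ⟨fun h => ?_, ?_⟩, mem_erase.mpr ⟨fun h => ?_, ?_⟩⟩⟩
    · rcases Sym2.eq_iff.mp h with ⟨-, h⟩ | ⟨-, h⟩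
      exacts [hxy h.symm, huy.ne h.symm]
    · exact (mem_incidenceFinset _ _ _).mpr (G.mk'_mem_incidenceSet_left_iff.mpr hxy')
    · rcases Sym2.eq_iff.mp h with ⟨h, -⟩ | ⟨h, -⟩
      exacts [hux.ne h.symm, hxy h]
    · exact (mem_incidenceFinset _ _ _).mpr (G.mk'_mem_incidenceSet_right_iff.mpr hxy')

theorem card_sdiff_insert_neighborFinset_add {u v : V} (huv : G.Adj u v) :
    #(G.neighborFinset u \ insert v (G.neighborFinset v)) +
      #(G.neighborFinset u ∩ G.neighborFinset v) + 1 = G.degree u := by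
  have hv : v ∉ G.neighborFinset u ∩ G.neighborFinset v := by simp
  rw [add_assoc]
  conv_rhs => rw [← card_neighborFinset_eq_degree,
    ← card_sdiff_add_card_inter (G.neighborFinset u) (insert v (G.neighborFinset v)),
    inter_insert_of_mem ((G.mem_neighborFinset u v).mpr huv), card_insert_of_notMem hv]

theorem card_seenEdges_add_two_le (hclaw : ClawFree G) (hΔ : G.maxDegree ≤ 4) {u v : V}
    (huv : G.Adj u v) : #(G.seenEdges s(u, v)) + 2 ≤ 2 * G.degree u + 2 * G.degree v := by
  have hcommon :
      #((G.neighborFinset u ∩ G.neighborFinset v).biUnion fun x => G.incidenceFinset x) ≤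
        #(G.neighborFinset u ∩ G.neighborFinset v) * 4 :=
    card_biUnion_le_card_mul _ _ _ fun x _ => by
      rw [card_incidenceFinset_eq_degree]
      exact (G.degree_le_maxDegree x).trans hΔ
  have hu := card_sdiff_insert_neighborFinset_add huv
  have hv := card_sdiff_insert_neighborFinset_add huv.symm
  rw [inter_comm] at hv
  have hseen := card_le_card (seenEdges_subset (G := G) u v)
  grw [card_union_le, card_union_le, hcommon, card_biUnion_incidenceFinset_erase_le hclaw hΔ huv,
    card_biUnion_incidenceFinset_erase_le hclaw hΔ huv.symm] at hseen
  omega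

end Counting

theorem exists_induce_edgeSet_map_val {s : Set V} {e : Sym2 V} (he : e ∈ G.edgeSet)
    (hs : ∀ x ∈ e, x ∈ s) : ∃ g ∈ (G.induce s).edgeSet, g.map Subtype.val = e := by
  induction e using Sym2.ind with
  | h x y =>
    exact ⟨s(⟨x, hs x (Sym2.mem_mk_left x y)⟩, ⟨y, hs y (Sym2.mem_mk_right x y)⟩), he, rfl⟩

/-- The colour count is written `k + 1` so that `0 : Fin (k + 1)` can serve as the junk colour
of `Function.extend`. -/
theorem hasInjColoring_of_induce_ne [Fintype V] {k : ℕ} {v : V}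
    (hH : HasInjColoring (G.induce {x | x ≠ v}) (k + 1))
    (hseen : ∀ u, G.Adj v u → #(G.seenEdges s(v, u)) ≤ k) : HasInjColoring G (k + 1) := by
  classical
  obtain ⟨ψ, hψ⟩ := hH
  let ψ' : Sym2 {x | x ≠ v} → Fin (k + 1) := fun g =>
    if hg : g ∈ (G.induce {x | x ≠ v}).edgeSet then ψ ⟨g, hg⟩ else 0
  let c₀ : Sym2 V → Fin (k + 1) := Function.extend (Sym2.map Subtype.val) ψ' 0
  have hlift : ∀ e ∈ G.edgeSet, e ∉ G.incidenceFinset v →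
      ∃ g : (G.induce {x | x ≠ v}).edgeSet, Sym2.map Subtype.val g.1 = e ∧ c₀ e = ψ g :=
    fun e he hev => by
      have hv : ∀ x ∈ e, x ∈ {x | x ≠ v} := fun x hx hxv =>
        hev ((mem_incidenceFinset _ _ _).mpr ⟨he, hxv ▸ hx⟩)
      obtain ⟨g, hg, rfl⟩ := exists_induce_edgeSet_map_val he hv
      exact ⟨⟨g, hg⟩, rfl,
        ((Sym2.map.injective Subtype.val_injective).extend_apply _ _ _).trans (dif_pos hg)⟩
  obtain ⟨c, hc⟩ := exists_proper_coloring_extension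
    (r := fun e f => e ∈ G.edgeSet ∧ f ∈ G.edgeSet ∧ e ≠ f ∧ Sees G e f)
    (fun e f ⟨he, hf, hne, hs⟩ => ⟨hf, he, hne.symm, hs.symm⟩) (fun e h => h.2.2.1 rfl)
    G.seenEdges (G.incidenceFinset v)
    (fun e _ f ⟨_, hf, hne, hs⟩ => mem_seenEdges.mpr ⟨hf, hne.symm, hs⟩)
    (fun e he => by
      obtain ⟨he, hve⟩ := (mem_incidenceFinset _ _ _).mp he
      obtain ⟨u, rfl⟩ := Sym2.mem_iff_exists.mp hve
      exact Nat.lt_succ_of_le (hseen u he))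
    c₀ fun e f he hf ⟨heE, hfE, hne, hs⟩ => by
      obtain ⟨g, rfl, hge⟩ := hlift e heE he
      obtain ⟨g', rfl, hg'f⟩ := hlift f hfE hf
      rw [hge, hg'f]
      have hgg' : g.1 ≠ g'.1 := fun h => hne (congrArg _ h)
      exact hψ g g' hgg' (hs.of_map (Embedding.induce _) hgg')
  exact ⟨fun e => c e, fun e f hne hs => hc e f ⟨e.2, f.2, hne, hs⟩⟩

end SimpleGraph

theorem stmt_5 {V : Type} [Fintype V] (G : SimpleGraph V) [DecidableRel G.Adj]
    (hclaw : ClawFree G) (hΔ : G.maxDegree ≤ 4) (hG : 13 < injChromIndex G)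
    (hmin : ∀ (W : Type) [Fintype W] (H : SimpleGraph W) [DecidableRel H.Adj],
      Fintype.card W < Fintype.card V → ClawFree H → H.maxDegree ≤ 4 →
      injChromIndex H ≤ 13) :
    ∀ v : V, G.degree v = 4 := by
  classical
  intro v
  by_contra hv
  have hv3 : G.degree v ≤ 3 := by have := G.degree_le_maxDegree v; omega
  have hH : HasInjColoring (G.induce {x | x ≠ v}) 13 :=
    hasInjColoring_of_injChromIndex_le <| hmin _ _ (Fintype.card_subtype_lt (x := v) (by simp))
      (hclaw.of_embedding (Embedding.induce _))
      ((Copy.maxDegree_mono (Embedding.induce _).toCopy).trans hΔ)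
  have hG13 : HasInjColoring G 13 := hasInjColoring_of_induce_ne hH fun u hvu => by
    have := card_seenEdges_add_two_le hclaw hΔ hvu
    have := G.degree_le_maxDegree u
    omega
  exact absurd (Nat.sInf_le hG13) hG.not_ge
end

section
/- Let G be a graph with maximum degree Δ(G) = 4 and maximum average degree mad(G) < 18/5. Then χ'_inj(G) ≤ 14. -/
open SimpleGraph

/-- `mad(G) < q`: every nonempty (induced) subgraph `H` satisfies `2|E(H)| < q * |V(H)|`. -/
def MadLt {V : Type} [Fintype V] (G : SimpleGraph V) (q : ℚ) : Prop :=
  ∀ s : Finset V, s.Nonempty →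
    (2 * ({e ∈ G.edgeSet | ∀ x ∈ e, x ∈ s}.ncard) : ℚ) < q * s.card

/-
Colour the edges greedily: it suffices that every nonempty set `F` of edges of `G` contains an
edge seeing at most 13 other edges of `F`. Otherwise let `H` be the subgraph induced on the
vertices of `F`. Every edge seen by `uv ∈ F` has an endpoint `w` adjacent to `u` or `v`, and at
most `deg w - 1` edges at such a `w` are seen unless `w` is a common neighbour of `u` and `v`.
Counting gives `deg u + deg v ≥ 7`, so `H` has only vertices of degree 3 and 4; if `deg u = 3`
then `u` and `v` have no common neighbour, and the numbers of seen edges at the five vertices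
around `uv` fall short of 3 by at most one in total. Hence a 3-vertex has at most one 3-neighbour, a 4-vertex at most two, and if a
4-vertex has two 3-neighbours, neither of them has a 3-neighbour. Discharging, where every
4-vertex sends `2 + #(3-neighbours of u)` to each adjacent 3-vertex `u`, yields
`6 n₃ ≤ 4 n₄`, so `H` has average degree at least `18/5`, contradicting `mad G < 18/5`.
-/

open Finset

open scoped Classical

noncomputable section

variable {V : Type} {G : SimpleGraph V}

lemma adj_of_mem_triangle {x y z a b : V} {e e' : Sym2 V}
    (hxy : G.Adj x y) (hyz : G.Adj y z) (hxz : G.Adj x z)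
    (he : e ∈ ({s(x, y), s(y, z), s(x, z)} : Set (Sym2 V)))
    (he' : e' ∈ ({s(x, y), s(y, z), s(x, z)} : Set (Sym2 V)))
    (ha : a ∈ e) (hb : b ∈ e') (hab : a ≠ b) : G.Adj a b := by
  simp only [Set.mem_insert_iff, Set.mem_singleton_iff] at he he'
  rcases he with rfl | rfl | rfl <;> rcases he' with rfl | rfl | rfl <;>
    simp only [Sym2.mem_iff] at ha hb <;>
    rcases ha with rfl | rfl <;> rcases hb with rfl | rfl <;>
    first | exact absurd rfl hab | assumption | exact (‹G.Adj _ _›).symm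

lemma mem_or_mem_of_triangle {x y z : V} {e e' : Sym2 V}
    (he : e ∈ ({s(x, y), s(y, z), s(x, z)} : Set (Sym2 V)))
    (he' : e' ∈ ({s(x, y), s(y, z), s(x, z)} : Set (Sym2 V))) (hne : e ≠ e') :
    ∀ a, a = x ∨ a = y ∨ a = z → a ∈ e ∨ a ∈ e' := by
  simp only [Set.mem_insert_iff, Set.mem_singleton_iff] at he he'
  rintro a (rfl | rfl | rfl) <;>
    rcases he with rfl | rfl | rfl <;> rcases he' with rfl | rfl | rfl <;> simp_all

lemma sees_comm {e e' : Sym2 V} : Sees G e e' ↔ Sees G e' e := by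
  unfold Sees
  constructor <;>
  · rintro (⟨hd, x, hx, y, hy, hxy⟩ | ⟨x, y, z, h₁, h₂, h₃, he, he'⟩)
    · exact Or.inl ⟨fun a ha hae => hd a hae ha, y, hy, x, hx, hxy.symm⟩
    · exact Or.inr ⟨x, y, z, h₁, h₂, h₃, he', he⟩

lemma exists_mem_ne_ne_of_ne {u v : V} {e : Sym2 V} (he : ¬ e.IsDiag) (hne : e ≠ s(u, v)) :
    ∃ w ∈ e, w ≠ u ∧ w ≠ v := by
  induction e using Sym2.inductionOn with
  | hf a b =>
    by_contra! h
    have ha : a = u ∨ a = v := or_iff_not_imp_left.2 (h a (Sym2.mem_mk_left a b))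
    have hb : b = u ∨ b = v := or_iff_not_imp_left.2 (h b (Sym2.mem_mk_right a b))
    rw [Sym2.mk_isDiag_iff] at he
    rcases ha with rfl | rfl <;> rcases hb with rfl | rfl <;> simp_all [Sym2.eq_swap]

lemma Sees.exists_adj {u v : V} {e : Sym2 V} (h : Sees G s(u, v) e) (hne : s(u, v) ≠ e)
    (he : e ∈ G.edgeSet) : ∃ w ∈ e, w ≠ u ∧ w ≠ v ∧ (G.Adj u w ∨ G.Adj v w) := by
  rcases h with ⟨hd, x, hx, y, hy, hxy⟩ | ⟨x, y, z, h₁, h₂, h₃, huv, he'⟩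
  · have hyu : y ≠ u := fun h => hd u (Sym2.mem_mk_left u v) (h ▸ hy)
    have hyv : y ≠ v := fun h => hd v (Sym2.mem_mk_right u v) (h ▸ hy)
    rcases Sym2.mem_iff.1 hx with rfl | rfl
    exacts [⟨y, hy, hyu, hyv, Or.inl hxy⟩, ⟨y, hy, hyu, hyv, Or.inr hxy⟩]
  · obtain ⟨w, hw, hwu, hwv⟩ :=
      exists_mem_ne_ne_of_ne (G.not_isDiag_of_mem_edgeSet he) (Ne.symm hne)
    exact ⟨w, hw, hwu, hwv, Or.inl <|
      adj_of_mem_triangle h₁ h₂ h₃ huv he' (Sym2.mem_mk_left u v) hw hwu.symm⟩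

lemma Sees.adj_of_mem_mem {u v w : V} (h : Sees G s(u, v) s(u, w)) (hvw : v ≠ w) :
    G.Adj v w := by
  rcases h with ⟨hd, -⟩ | ⟨x, y, z, h₁, h₂, h₃, he, he'⟩
  · exact absurd (Sym2.mem_mk_left u w) (hd u (Sym2.mem_mk_left u v))
  · exact adj_of_mem_triangle h₁ h₂ h₃ he he' (Sym2.mem_mk_right u v) (Sym2.mem_mk_right u w) hvw

lemma spanningCoe_induce_adj {s : Set V} {a b : V} :
    (G.induce s).spanningCoe.Adj a b ↔ G.Adj a b ∧ a ∈ s ∧ b ∈ s := by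
  simp

lemma Sees.spanningCoe_induce {s : Set V} {e e' : Sym2 V} (h : Sees G e e') (hne : e ≠ e')
    (he : ∀ a ∈ e, a ∈ s) (he' : ∀ a ∈ e', a ∈ s) : Sees (G.induce s).spanningCoe e e' := by
  rcases h with ⟨hd, x, hx, y, hy, hxy⟩ | ⟨x, y, z, h₁, h₂, h₃, hT, hT'⟩
  · exact Or.inl ⟨hd, x, hx, y, hy, spanningCoe_induce_adj.2 ⟨hxy, he x hx, he' y hy⟩⟩
  · have hmem : ∀ a, a = x ∨ a = y ∨ a = z → a ∈ s := fun a ha =>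
      (mem_or_mem_of_triangle hT hT' hne a ha).elim (he a) (he' a)
    refine Or.inr ⟨x, y, z, ?_, ?_, ?_, hT, hT'⟩ <;> rw [spanningCoe_induce_adj] <;>
      simp [*]

def conflictGraph (G : SimpleGraph V) : SimpleGraph (Sym2 V) := SimpleGraph.fromRel (Sees G)

lemma conflictGraph_adj {e e' : Sym2 V} : (conflictGraph G).Adj e e' ↔ e ≠ e' ∧ Sees G e e' := by
  rw [conflictGraph, fromRel_adj, sees_comm (e := e'), or_self]

theorem exists_coloring_of_forall_exists_card_le {α : Type*} (Γ : SimpleGraph α) (k : ℕ)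
    (S : Finset α) (h : ∀ F ⊆ S, F.Nonempty → ∃ x ∈ F, #{y ∈ F | Γ.Adj x y} ≤ k) :
    ∃ φ : α → Fin (k + 1), ∀ x ∈ S, ∀ y ∈ S, Γ.Adj x y → φ x ≠ φ y := by
  induction S using Finset.strongInduction with
  | H S ih =>
    rcases S.eq_empty_or_nonempty with rfl | hS
    · exact ⟨0, by simp⟩
    obtain ⟨x, hx, hdeg⟩ := h S subset_rfl hS
    obtain ⟨φ, hφ⟩ :=
      ih (S.erase x) (erase_ssubset hx) fun F hF => h F (hF.trans (erase_subset x S))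
    obtain ⟨c, -, hc⟩ := exists_mem_notMem_of_card_lt_card (s := image φ {y ∈ S | Γ.Adj x y})
      (t := univ) (by simpa using card_image_le.trans_lt (Nat.lt_succ_of_le hdeg))
    have hx : ∀ y ∈ S, Γ.Adj x y → Function.update φ x c x ≠ Function.update φ x c y := by
      intro y hy hxy
      rw [Function.update_self, Function.update_of_ne hxy.ne.symm]
      exact fun hcy => hc (hcy ▸ mem_image_of_mem φ (mem_filter.2 ⟨hy, hxy⟩))
    refine ⟨Function.update φ x c, fun y hy z hz hyz => ?_⟩
    by_cases hyx : y = x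
    · subst hyx
      exact hx z hz hyz
    by_cases hzx : z = x
    · subst hzx
      exact (hx y hy hyz.symm).symm
    rw [Function.update_of_ne hyx, Function.update_of_ne hzx]
    exact hφ y (mem_erase.2 ⟨hyx, hy⟩) z (mem_erase.2 ⟨hzx, hz⟩) hyz

def seenIn (H : SimpleGraph V) (F : Finset (Sym2 V)) (e : Sym2 V) : Finset (Sym2 V) :=
  {e' ∈ F | (conflictGraph H).Adj e e'}

lemma mem_of_mem_seenIn {H : SimpleGraph V} {F : Finset (Sym2 V)} {e e' : Sym2 V}
    (h : e' ∈ seenIn H F e) : e' ∈ F :=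
  (mem_filter.1 h).1

lemma notMem_seenIn_of_not_adj {H : SimpleGraph V} {F : Finset (Sym2 V)} {u v w : V}
    (hvw : ¬ H.Adj v w) : s(w, u) ∉ seenIn H F s(u, v) := by
  intro h
  obtain ⟨hne, hsees⟩ := conflictGraph_adj.1 (mem_filter.1 h).2
  rw [Sym2.eq_swap (a := w)] at hsees hne
  exact hvw (hsees.adj_of_mem_mem fun hvw' => hne (hvw' ▸ rfl))

variable [Fintype V] {H : SimpleGraph V} [DecidableRel H.Adj] {F : Finset (Sym2 V)} {e : Sym2 V}
  {u v w : V}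

def edgeNbrs (H : SimpleGraph V) [DecidableRel H.Adj] (u v : V) : Finset V :=
  (H.neighborFinset u ∪ H.neighborFinset v) \ {u, v}

def seenAt (H : SimpleGraph V) [DecidableRel H.Adj] (F : Finset (Sym2 V)) (e : Sym2 V) (w : V) :
    Finset V :=
  {t ∈ H.neighborFinset w | s(w, t) ∈ seenIn H F e}

def nbrsOfDegree (H : SimpleGraph V) [DecidableRel H.Adj] (v : V) (k : ℕ) : Finset V :=
  {x ∈ H.neighborFinset v | H.degree x = k}

lemma mem_edgeNbrs : w ∈ edgeNbrs H u v ↔ (H.Adj u w ∨ H.Adj v w) ∧ w ≠ u ∧ w ≠ v := by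
  simp [edgeNbrs]

lemma mem_nbrsOfDegree {x : V} {k : ℕ} : x ∈ nbrsOfDegree H v k ↔ H.Adj v x ∧ H.degree x = k := by
  simp [nbrsOfDegree]

lemma card_edgeNbrs_add_card_inter (huv : H.Adj u v) :
    #(edgeNbrs H u v) + #(H.neighborFinset u ∩ H.neighborFinset v) + 2 =
      H.degree u + H.degree v := by
  have hsub : ({u, v} : Finset V) ⊆ H.neighborFinset u ∪ H.neighborFinset v := by
    simp [insert_subset_iff, huv, huv.symm]
  have := card_union_add_card_inter (H.neighborFinset u) (H.neighborFinset v)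
  rw [card_neighborFinset_eq_degree, card_neighborFinset_eq_degree,
    ← card_sdiff_add_card_eq_card hsub, card_pair huv.ne] at this
  rw [edgeNbrs]
  omega

lemma card_seenIn_le_sum_card_seenAt (hF : ∀ e ∈ F, e ∈ H.edgeSet) :
    #(seenIn H F s(u, v)) ≤ ∑ w ∈ edgeNbrs H u v, #(seenAt H F s(u, v) w) := by
  calc #(seenIn H F s(u, v))
      ≤ #((edgeNbrs H u v).biUnion fun w => (seenAt H F s(u, v) w).image (s(w, ·))) := by
        refine card_le_card fun e he => ?_
        obtain ⟨heF, hne, hsees⟩ := (mem_filter.1 he).imp_right conflictGraph_adj.1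
        obtain ⟨w, hwe, hwu, hwv, hadj⟩ := hsees.exists_adj hne (hF e heF)
        obtain ⟨t, rfl⟩ := Sym2.mem_iff_exists.1 hwe
        refine mem_biUnion.2 ⟨w, mem_edgeNbrs.2 ⟨hadj, hwu, hwv⟩, mem_image.2 ⟨t, ?_, rfl⟩⟩
        exact mem_filter.2 ⟨(mem_neighborFinset _ _ _).2 (hF _ heF), he⟩
    _ ≤ _ := card_biUnion_le.trans (sum_le_sum fun _ _ => card_image_le)

lemma card_seenAt_le_degree : #(seenAt H F e w) ≤ H.degree w :=
  (card_le_card (filter_subset _ _)).trans_eq (card_neighborFinset_eq_degree H w)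

lemma card_seenAt_add_card_le {T : Finset V} (hT : T ⊆ H.neighborFinset w)
    (h : ∀ t ∈ T, s(w, t) ∉ seenIn H F e) : #(seenAt H F e w) + #T ≤ H.degree w := by
  rw [← card_union_of_disjoint (s := seenAt H F e w)
      (disjoint_left.2 fun t ht htT => h t htT (mem_filter.1 ht).2),
    ← card_neighborFinset_eq_degree]
  exact card_le_card (union_subset (filter_subset _ _) hT)

lemma card_seenAt_lt_degree (hw : w ∈ edgeNbrs H u v) (hC : ¬ (H.Adj u w ∧ H.Adj v w)) :
    #(seenAt H F s(u, v) w) < H.degree w := by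
  rcases (mem_edgeNbrs.1 hw).1 with huw | hvw
  · have := card_seenAt_add_card_le (F := F) (e := s(u, v)) (T := {u})
      (by simpa using huw.symm) (by simpa using notMem_seenIn_of_not_adj fun h => hC ⟨huw, h⟩)
    simpa using this
  · have := card_seenAt_add_card_le (F := F) (e := s(v, u)) (T := {v})
      (by simpa using hvw.symm) (by simpa using notMem_seenIn_of_not_adj fun h => hC ⟨h, hvw⟩)
    simpa [Sym2.eq_swap] using this

lemma card_seenAt_add_card_le_of_forall_notMem {T : Finset V} (hT : T ⊆ H.neighborFinset w)
    (h : ∀ t ∈ T, s(w, t) ∉ F) : #(seenAt H F e w) + #T ≤ H.degree w :=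
  card_seenAt_add_card_le hT fun t ht hs => h t ht (mem_of_mem_seenIn hs)

def charge (H : SimpleGraph V) [DecidableRel H.Adj] (u : V) : ℕ := 2 + #(nbrsOfDegree H u 3)

structure IsHeavy (H : SimpleGraph V) [DecidableRel H.Adj] (F : Finset (Sym2 V)) : Prop where
  subset_edgeSet : ∀ e ∈ F, e ∈ H.edgeSet
  exists_mem_of_adj : ∀ ⦃u w : V⦄, H.Adj u w → ∃ x, s(u, x) ∈ F
  degree_le : ∀ v, H.degree v ≤ 4
  le_card_seenIn : ∀ e ∈ F, 14 ≤ #(seenIn H F e)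

namespace IsHeavy

variable (hH : IsHeavy H F)
include hH

lemma le_sum_card_seenAt (huv : s(u, v) ∈ F) :
    14 ≤ ∑ w ∈ edgeNbrs H u v, #(seenAt H F s(u, v) w) :=
  (hH.le_card_seenIn _ huv).trans (card_seenIn_le_sum_card_seenAt hH.subset_edgeSet)

lemma adj_of_mem (huv : s(u, v) ∈ F) : H.Adj u v := hH.subset_edgeSet _ huv

lemma fourteen_le_three_mul_card_edgeNbrs_add (huv : s(u, v) ∈ F) :
    14 ≤ 3 * #(edgeNbrs H u v) + #(H.neighborFinset u ∩ H.neighborFinset v) := by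
  set W := edgeNbrs H u v
  set C := H.neighborFinset u ∩ H.neighborFinset v
  have hCW : C ⊆ W := fun w hw => by
    simp only [C, mem_inter, mem_neighborFinset] at hw
    exact mem_edgeNbrs.2 ⟨Or.inl hw.1, hw.1.ne.symm, hw.2.ne.symm⟩
  calc 14 ≤ ∑ w ∈ W, #(seenAt H F s(u, v) w) := hH.le_sum_card_seenAt huv
    _ = ∑ w ∈ W \ C, #(seenAt H F s(u, v) w) + ∑ w ∈ C, #(seenAt H F s(u, v) w) :=
        (sum_sdiff hCW).symm
    _ ≤ #(W \ C) * 3 + #C * 4 := by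
        gcongr
        · refine sum_le_card_nsmul _ _ _ fun w hw => ?_
          have := card_seenAt_lt_degree (F := F) (mem_sdiff.1 hw).1
            fun h => (mem_sdiff.1 hw).2 (by simpa [C] using h)
          have := hH.degree_le w
          omega
        · exact sum_le_card_nsmul _ _ _ fun w _ => card_seenAt_le_degree.trans (hH.degree_le w)
    _ = 3 * #W + #C := by
        have := card_sdiff_add_card_eq_card hCW
        omega

lemma seven_le_degree_add_degree (huv : s(u, v) ∈ F) : 7 ≤ H.degree u + H.degree v := by
  have := hH.fourteen_le_three_mul_card_edgeNbrs_add huv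
  have := card_edgeNbrs_add_card_inter (hH.adj_of_mem huv)
  have := hH.degree_le u
  have := hH.degree_le v
  omega

lemma three_le_degree (huw : H.Adj u w) : 3 ≤ H.degree u := by
  obtain ⟨x, hx⟩ := hH.exists_mem_of_adj huw
  have := hH.seven_le_degree_add_degree hx
  have := hH.degree_le x
  omega

lemma of_degree_eq_three (huv : s(u, v) ∈ F) (hu : H.degree u = 3) :
    H.degree v = 4 ∧ Disjoint (H.neighborFinset u) (H.neighborFinset v) ∧
      #(edgeNbrs H u v) = 5 := by
  have := hH.fourteen_le_three_mul_card_edgeNbrs_add huv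
  have := card_edgeNbrs_add_card_inter (hH.adj_of_mem huv)
  have := hH.degree_le v
  refine ⟨by omega, disjoint_iff_inter_eq_empty.2 (card_eq_zero.1 (by omega)), by omega⟩

lemma card_seenAt_lt_degree_of_degree_eq_three (huv : s(u, v) ∈ F) (hu : H.degree u = 3)
    (hw : w ∈ edgeNbrs H u v) : #(seenAt H F s(u, v) w) < H.degree w :=
  card_seenAt_lt_degree hw fun h =>
    disjoint_left.1 (hH.of_degree_eq_three huv hu).2.1 (by simpa using h.1) (by simpa using h.2)

lemma five_le_card_seenAt_add_card_seenAt (huv : s(u, v) ∈ F) (hu : H.degree u = 3)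
    {w₁ w₂ : V} (hw₁ : w₁ ∈ edgeNbrs H u v) (hw₂ : w₂ ∈ edgeNbrs H u v) (hne : w₁ ≠ w₂) :
    5 ≤ #(seenAt H F s(u, v) w₁) + #(seenAt H F s(u, v) w₂) := by
  set W := edgeNbrs H u v
  have hsub : ({w₁, w₂} : Finset V) ⊆ W := insert_subset hw₁ (singleton_subset_iff.2 hw₂)
  have hrest : ∑ w ∈ W \ {w₁, w₂}, #(seenAt H F s(u, v) w) ≤ #(W \ {w₁, w₂}) * 3 :=
    sum_le_card_nsmul _ _ _ fun w hw => by
      have := hH.card_seenAt_lt_degree_of_degree_eq_three huv hu (mem_sdiff.1 hw).1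
      have := hH.degree_le w
      omega
  have hsum := hH.le_sum_card_seenAt huv
  rw [← sum_sdiff hsub, sum_pair hne] at hsum
  rw [card_sdiff_of_subset hsub, card_pair hne, (hH.of_degree_eq_three huv hu).2.2] at hrest
  omega

lemma eq_of_mem_edgeNbrs_of_degree_eq_three (huv : s(u, v) ∈ F) (hu : H.degree u = 3)
    {w₁ w₂ : V} (hw₁ : w₁ ∈ edgeNbrs H u v) (hw₂ : w₂ ∈ edgeNbrs H u v)
    (h₁ : H.degree w₁ = 3) (h₂ : H.degree w₂ = 3) : w₁ = w₂ := by
  by_contra hne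
  have := hH.five_le_card_seenAt_add_card_seenAt huv hu hw₁ hw₂ hne
  have := hH.card_seenAt_lt_degree_of_degree_eq_three huv hu hw₁
  have := hH.card_seenAt_lt_degree_of_degree_eq_three huv hu hw₂
  omega

lemma two_le_card_seenAt (huv : s(u, v) ∈ F) (hu : H.degree u = 3) (hw : w ∈ edgeNbrs H u v) :
    2 ≤ #(seenAt H F s(u, v) w) := by
  obtain ⟨-, -, hW⟩ := hH.of_degree_eq_three huv hu
  obtain ⟨w', hw', hne⟩ := exists_mem_ne (by omega : 1 < #(edgeNbrs H u v)) w
  have := hH.five_le_card_seenAt_add_card_seenAt huv hu hw hw' hne.symm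
  have := hH.card_seenAt_lt_degree_of_degree_eq_three huv hu hw'
  have := hH.degree_le w'
  omega

lemma card_nbrsOfDegree_three_le_one (hu : H.degree u = 3) : #(nbrsOfDegree H u 3) ≤ 1 := by
  refine card_le_one.2 fun a ha b hb => ?_
  rw [mem_nbrsOfDegree] at ha hb
  obtain ⟨h, huh⟩ := hH.exists_mem_of_adj ha.1
  have hh := (hH.of_degree_eq_three huh hu).1
  have hmem : ∀ x, H.Adj u x → H.degree x = 3 → x ∈ edgeNbrs H u h := fun x hx hx3 =>
    mem_edgeNbrs.2 ⟨Or.inl hx, hx.ne.symm, by rintro rfl; omega⟩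
  exact hH.eq_of_mem_edgeNbrs_of_degree_eq_three huh hu (hmem a ha.1 ha.2) (hmem b hb.1 hb.2)
    ha.2 hb.2

lemma card_nbrsOfDegree_three_le_two (v : V) : #(nbrsOfDegree H v 3) ≤ 2 := by
  by_contra! h3
  obtain ⟨a, ha, b, hb, c, hc, hab, hac, hbc⟩ := two_lt_card.1 h3
  simp only [mem_nbrsOfDegree] at ha hb hc
  have hnotF : ∀ {x y z : V}, H.Adj v x ∧ H.degree x = 3 → H.Adj v y ∧ H.degree y = 3 →
      H.Adj v z ∧ H.degree z = 3 → y ≠ x → z ≠ x → y ≠ z → s(v, x) ∉ F := by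
    intro x y z hx hy hz hyx hzx hyz hvx
    rw [Sym2.eq_swap] at hvx
    exact hyz <| hH.eq_of_mem_edgeNbrs_of_degree_eq_three hvx hx.2
      (mem_edgeNbrs.2 ⟨Or.inr hy.1, hyx, hy.1.ne.symm⟩)
      (mem_edgeNbrs.2 ⟨Or.inr hz.1, hzx, hz.1.ne.symm⟩) hy.2 hz.2
  obtain ⟨h, hah⟩ := hH.exists_mem_of_adj ha.1.symm
  obtain ⟨-, hdisj, -⟩ := hH.of_degree_eq_three hah ha.2
  by_cases hhv : h = v
  · subst hhv
    exact hnotF ha hb hc hab.symm hac.symm hbc (by rwa [Sym2.eq_swap])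
  have hvh : ¬ H.Adj h v := fun hhv' =>
    disjoint_left.1 hdisj (by simpa using ha.1.symm) (by simpa using hhv')
  have := hH.two_le_card_seenAt hah ha.2 (mem_edgeNbrs.2 ⟨Or.inl ha.1.symm, ha.1.ne, Ne.symm hhv⟩)
  have := card_seenAt_add_card_le (H := H) (F := F) (e := s(a, h)) (w := v) (T := {a, b, c})
    (by simp [insert_subset_iff, ha.1, hb.1, hc.1]) <| by
      simp only [mem_insert, mem_singleton, forall_eq_or_imp, forall_eq]
      exact ⟨notMem_seenIn_of_not_adj hvh,
        fun hs => hnotF hb ha hc hab hbc.symm hac (mem_of_mem_seenIn hs),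
        fun hs => hnotF hc ha hb hac hbc hab (mem_of_mem_seenIn hs)⟩
  rw [card_eq_three.2 ⟨a, b, c, hab, hac, hbc, rfl⟩] at this
  have := hH.degree_le v
  omega

lemma nbrsOfDegree_three_eq_empty (hv : H.degree v = 4) {u₁ u₂ : V}
    (hu₁ : u₁ ∈ nbrsOfDegree H v 3) (hu₂ : u₂ ∈ nbrsOfDegree H v 3) (hne : u₁ ≠ u₂) :
    nbrsOfDegree H u₁ 3 = ∅ := by
  rw [mem_nbrsOfDegree] at hu₁ hu₂
  refine eq_empty_of_forall_notMem fun x hx => ?_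
  rw [mem_nbrsOfDegree] at hx
  have hxv : x ≠ v := by rintro rfl; omega
  have hu₁v : s(u₁, v) ∉ F := fun hF => by
    obtain ⟨-, hdisj, -⟩ := hH.of_degree_eq_three hF hu₁.2
    refine disjoint_left.1 hdisj (by simpa using hx.1 : x ∈ H.neighborFinset u₁) ?_
    have := hH.eq_of_mem_edgeNbrs_of_degree_eq_three hF hu₁.2
      (mem_edgeNbrs.2 ⟨Or.inl hx.1, hx.1.ne.symm, hxv⟩)
      (mem_edgeNbrs.2 ⟨Or.inr hu₂.1, hne.symm, hu₂.1.ne.symm⟩) hx.2 hu₂.2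
    simpa [this] using hu₂.1
  have hu₁x : s(u₁, x) ∉ F := fun hF => by
    have := hH.seven_le_degree_add_degree hF
    omega
  by_cases hu₂v : s(u₂, v) ∈ F
  · have := hH.two_le_card_seenAt hu₂v hu₂.2 (mem_edgeNbrs.2 ⟨Or.inr hu₁.1, hne, hu₁.1.ne.symm⟩)
    have := card_seenAt_add_card_le_of_forall_notMem (H := H) (F := F) (e := s(u₂, v))
      (w := u₁) (T := {v, x})
      (by simp [insert_subset_iff, hu₁.1.symm, hx.1]) (by simp [hu₁v, hu₁x])
    rw [card_pair hxv.symm] at this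
    omega
  obtain ⟨h, hu₁h⟩ := hH.exists_mem_of_adj hu₁.1.symm
  have hxh : x ≠ h := by
    rintro rfl
    have := (hH.of_degree_eq_three hu₁h hu₁.2).1
    omega
  have hxW : x ∈ edgeNbrs H u₁ h := mem_edgeNbrs.2 ⟨Or.inl hx.1, hx.1.ne.symm, hxh⟩
  have hvW : v ∈ edgeNbrs H u₁ h :=
    mem_edgeNbrs.2 ⟨Or.inl hu₁.1.symm, hu₁.1.ne, by rintro rfl; exact hu₁v hu₁h⟩
  have := hH.five_le_card_seenAt_add_card_seenAt hu₁h hu₁.2 hxW hvW hxv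
  have := hH.card_seenAt_lt_degree_of_degree_eq_three hu₁h hu₁.2 hxW
  have := card_seenAt_add_card_le_of_forall_notMem (H := H) (F := F) (e := s(u₁, h))
    (w := v) (T := {u₁, u₂})
    (by simp [insert_subset_iff, hu₁.1, hu₂.1])
    (by simp [Sym2.eq_swap (a := v), hu₁v, hu₂v])
  rw [card_pair hne] at this
  omega

lemma card_nbrsOfDegree_three_add_card_nbrsOfDegree_four (u : V) :
    #(nbrsOfDegree H u 3) + #(nbrsOfDegree H u 4) = H.degree u := by
  rw [← card_neighborFinset_eq_degree, nbrsOfDegree, nbrsOfDegree,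
    ← card_filter_add_card_filter_not (s := H.neighborFinset u) (fun x => H.degree x = 3)]
  congr 2
  refine filter_congr fun x hx => ?_
  have := hH.three_le_degree ((mem_neighborFinset _ _ _).1 hx).symm
  have := hH.degree_le x
  omega

lemma charge_mul_card_nbrsOfDegree_four (hu : H.degree u = 3) :
    charge H u * #(nbrsOfDegree H u 4) = 6 := by
  have := hH.card_nbrsOfDegree_three_le_one hu
  have := hH.card_nbrsOfDegree_three_add_card_nbrsOfDegree_four u
  rw [charge]
  interval_cases #(nbrsOfDegree H u 3) <;> omega

lemma sum_charge_le_four (hv : H.degree v = 4) : ∑ u ∈ nbrsOfDegree H v 3, charge H u ≤ 4 := by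
  have := hH.card_nbrsOfDegree_three_le_two v
  obtain h | h := (by omega : #(nbrsOfDegree H v 3) ≤ 1 ∨ #(nbrsOfDegree H v 3) = 2)
  · have hle : ∀ u ∈ nbrsOfDegree H v 3, charge H u ≤ 3 := fun u hu => by
      have := hH.card_nbrsOfDegree_three_le_one (mem_nbrsOfDegree.1 hu).2
      rw [charge]
      omega
    calc ∑ u ∈ nbrsOfDegree H v 3, charge H u ≤ #(nbrsOfDegree H v 3) • 3 :=
          sum_le_card_nsmul _ _ _ hle
      _ ≤ 4 := by rw [smul_eq_mul]; omega
  · obtain ⟨u₁, u₂, hne, he⟩ := card_eq_two.1 h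
    have hu₁ : u₁ ∈ nbrsOfDegree H v 3 := he ▸ mem_insert_self _ _
    have hu₂ : u₂ ∈ nbrsOfDegree H v 3 := he ▸ mem_insert_of_mem (mem_singleton_self _)
    rw [he, sum_pair hne, charge, charge, hH.nbrsOfDegree_three_eq_empty hv hu₁ hu₂ hne,
      hH.nbrsOfDegree_three_eq_empty hv hu₂ hu₁ hne.symm, card_empty]

lemma six_mul_card_le_four_mul_card :
    6 * #{v | H.degree v = 3} ≤ 4 * #{v | H.degree v = 4} := by
  calc 6 * #{v | H.degree v = 3}
      = ∑ u ∈ {v | H.degree v = 3}, ∑ v ∈ nbrsOfDegree H u 4, charge H u := by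
        rw [mul_comm, ← smul_eq_mul, ← sum_const]
        refine sum_congr rfl fun u hu => ?_
        rw [sum_const, smul_eq_mul, mul_comm,
          hH.charge_mul_card_nbrsOfDegree_four (mem_filter.1 hu).2]
    _ = ∑ v ∈ {v | H.degree v = 4}, ∑ u ∈ nbrsOfDegree H v 3, charge H u :=
        sum_comm' fun u v => by
          simp only [mem_filter, mem_univ, true_and, mem_nbrsOfDegree, H.adj_comm u v]
          tauto
    _ ≤ ∑ v ∈ {v | H.degree v = 4}, 4 := sum_le_sum fun v hv =>
        hH.sum_charge_le_four (mem_filter.1 hv).2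
    _ = 4 * #{v | H.degree v = 4} := by rw [sum_const, smul_eq_mul, mul_comm]

lemma eighteen_mul_card_le_five_mul_sum_degree :
    18 * #{v | 0 < H.degree v} ≤ 5 * ∑ v, H.degree v := by
  have hdeg : ∀ v, H.degree v = 0 ∨ H.degree v = 3 ∨ H.degree v = 4 := fun v => by
    rcases Nat.eq_zero_or_pos (H.degree v) with h | h
    · exact Or.inl h
    obtain ⟨w, hw⟩ := (H.degree_pos_iff_exists_adj v).1 h
    have := hH.three_le_degree hw
    have := hH.degree_le v
    omega
  have hcard : #{v | 0 < H.degree v} = #{v | H.degree v = 3} + #{v | H.degree v = 4} := by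
    rw [← card_union_of_disjoint (disjoint_filter.2 fun v _ h₃ h₄ => by omega), ← filter_or]
    congr 1
    refine filter_congr fun v _ => ?_
    have := hdeg v
    omega
  have hsum : ∑ v, H.degree v = 3 * #{v | H.degree v = 3} + 4 * #{v | H.degree v = 4} := by
    simp only [card_filter, mul_sum, ← sum_add_distrib]
    refine sum_congr rfl fun v _ => ?_
    rcases hdeg v with h | h | h <;> simp [h]
  have := hH.six_mul_card_le_four_mul_card
  omega

end IsHeavy

lemma isHeavy_spanningCoe_induce [DecidableRel G.Adj] (hΔ : G.maxDegree ≤ 4)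
    (hF : F ⊆ G.edgeFinset) (h : ∀ e ∈ F, 14 ≤ #(seenIn G F e)) :
    IsHeavy (G.induce {v | ∃ e ∈ F, v ∈ e}).spanningCoe F where
  subset_edgeSet e he := by
    induction e using Sym2.inductionOn with
    | hf a b =>
      exact spanningCoe_induce_adj.2 ⟨by simpa using hF he, ⟨_, he, Sym2.mem_mk_left a b⟩,
        ⟨_, he, Sym2.mem_mk_right a b⟩⟩
  exists_mem_of_adj u w huw := by
    obtain ⟨e, he, hue⟩ := (spanningCoe_induce_adj.1 huw).2.1
    obtain ⟨x, rfl⟩ := Sym2.mem_iff_exists.1 hue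
    exact ⟨x, he⟩
  degree_le v := (degree_le_of_le (spanningCoe_induce_le G _)).trans
    ((G.degree_le_maxDegree v).trans hΔ)
  le_card_seenIn e he := (h e he).trans <| card_le_card fun e' he' => by
    obtain ⟨he'F, hadj⟩ := mem_filter.1 he'
    obtain ⟨hne, hsees⟩ := conflictGraph_adj.1 hadj
    refine mem_filter.2 ⟨he'F, conflictGraph_adj.2 ⟨hne, hsees.spanningCoe_induce hne ?_ ?_⟩⟩
    exacts [fun a ha => ⟨e, he, ha⟩, fun a ha => ⟨e', he'F, ha⟩]

theorem exists_card_seenIn_le [DecidableRel G.Adj] (hΔ : G.maxDegree ≤ 4)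
    (hmad : MadLt G (18 / 5)) (hF : F ⊆ G.edgeFinset) (hne : F.Nonempty) :
    ∃ e ∈ F, #(seenIn G F e) ≤ 13 := by
  by_contra! h
  set H := (G.induce {v | ∃ e ∈ F, v ∈ e}).spanningCoe
  have hH : IsHeavy H F := isHeavy_spanningCoe_induce hΔ hF h
  set s : Finset V := {v | 0 < H.degree v}
  have hs : s.Nonempty := by
    obtain ⟨e, he⟩ := hne
    induction e using Sym2.inductionOn with
    | hf a b =>
      exact ⟨a, by simpa [s] using (H.degree_pos_iff_exists_adj a).2 ⟨b, hH.subset_edgeSet _ he⟩⟩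
  have hedges : #H.edgeFinset ≤ {e ∈ G.edgeSet | ∀ x ∈ e, x ∈ s}.ncard := by
    rw [← Set.ncard_coe_finset]
    refine Set.ncard_le_ncard (fun e he => ?_) (Set.toFinite _)
    induction e using Sym2.inductionOn with
    | hf a b =>
      have hab : H.Adj a b := by simpa using he
      refine ⟨(spanningCoe_induce_adj.1 hab).1, fun x hx => ?_⟩
      rcases Sym2.mem_iff.1 hx with rfl | rfl
      · simpa [s] using (H.degree_pos_iff_exists_adj x).2 ⟨b, hab⟩
      · simpa [s] using (H.degree_pos_iff_exists_adj x).2 ⟨a, hab.symm⟩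
  have hdeg := hH.eighteen_mul_card_le_five_mul_sum_degree
  rw [sum_degrees_eq_twice_card_edges] at hdeg
  have hdegQ : (18 : ℚ) * #s ≤ 5 * (2 * #H.edgeFinset) := by exact_mod_cast hdeg
  have hedgesQ : (#H.edgeFinset : ℚ) ≤ {e ∈ G.edgeSet | ∀ x ∈ e, x ∈ s}.ncard := by
    exact_mod_cast hedges
  linarith [hmad s hs]

end

theorem stmt_19 {V : Type} [Fintype V] (G : SimpleGraph V) [DecidableRel G.Adj]
    (hΔ : G.maxDegree = 4) (hmad : MadLt G (18/5 : ℚ)) :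
    injChromIndex G ≤ 14 := by
  obtain ⟨φ, hφ⟩ := exists_coloring_of_forall_exists_card_le (conflictGraph G) 13 G.edgeFinset
    fun F hF hne => exists_card_seenIn_le hΔ.le hmad hF hne
  refine Nat.sInf_le ⟨fun e => φ e, fun e e' hne hsees => ?_⟩
  exact hφ e (by simp) e' (by simp) (conflictGraph_adj.2 ⟨hne, hsees⟩)
end
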